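/- The kernel K(t) = Σ_{q=1}^∞ (−1)^{q+1} q² exp(−π² q² t) tends to 0 as t → 0⁺; i.e., the limit of K(t) along the filter of punctured right neighborhoods of 0 is 0. -/

import Mathlib

/-!
Write `C(c) = ∑_{n ∈ ℤ} (-1)ⁿ e^{-π n² c}` (Mathlib's `cosKernel (1/2)`);
differentiating termwise, `C'(π t) = 2π K(t)`. Jacobi's transformation
`C(c) = c^{-1/2} E(1/c)`, where `E(x) = ∑_{n ∈ ℤ} e^{-π (n + 1/2)² x}`
(Mathlib's `evenKernel (1/2)`), moves `c → 0⁺` to `x → ∞`. There `E` and `E'`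
decay exponentially, since no `n + 1/2` vanishes, so the power of `x` produced
by the chain rule is harmless and `C'(c) → 0`.
-/

open Real Filter Topology HurwitzZeta

section ExpSeries

variable {ι : Type*} {a b : ι → ℝ}

theorem hasDerivAt_tsum_mul_exp_neg_mul (hb : ∀ i, 0 ≤ b i) {x : ℝ} (hx : 0 < x)
    (hab : ∀ y > 0, Summable fun i ↦ |a i| * b i * rexp (-b i * y))
    (ha : Summable fun i ↦ a i * rexp (-b i * x)) :
    HasDerivAt (fun y ↦ ∑' i, a i * rexp (-b i * y))
      (-∑' i, a i * b i * rexp (-b i * x)) x := by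
  rw [← tsum_neg]
  refine hasDerivAt_tsum_of_isPreconnected (g := fun i y ↦ a i * rexp (-b i * y))
    (g' := fun i y ↦ -(a i * b i * rexp (-b i * y))) (hab _ (half_pos hx)) isOpen_Ioi
    isPreconnected_Ioi (fun i y _ ↦ ?_) (fun i y hy ↦ ?_) (half_lt_self hx) ha (half_lt_self hx)
  · exact ((hasDerivAt_const_mul (-b i)).exp.const_mul (a i)).congr_deriv (by ring)
  · rw [norm_neg, norm_mul, norm_mul, Real.norm_eq_abs, Real.norm_eq_abs, abs_of_nonneg (hb i),
      Real.norm_eq_abs, Real.abs_exp]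
    have hexp : rexp (-b i * y) ≤ rexp (-b i * (x / 2)) :=
      exp_le_exp.mpr (by nlinarith [hb i, Set.mem_Ioi.mp hy])
    gcongr
    exact mul_nonneg (abs_nonneg _) (hb i)

theorem tsum_mul_exp_neg_mul_le (hb : ∀ i, 0 ≤ b i) {x : ℝ} (hx : 0 < x)
    (hs : Summable fun i ↦ rexp (-b i * (x / 2))) :
    ∑' i, b i * rexp (-b i * x) ≤ 2 / x * ∑' i, rexp (-b i * (x / 2)) := by
  -- `u ≤ exp u` with `u = b x / 2`, after splitting `exp (-b x)` into two halves
  have key : ∀ i, b i * rexp (-b i * x) ≤ 2 / x * rexp (-b i * (x / 2)) := fun i ↦ by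
    have hu := add_one_le_exp (b i * (x / 2))
    have hsplit : rexp (-b i * x) = rexp (-b i * (x / 2)) * rexp (-b i * (x / 2)) := by
      rw [← Real.exp_add]; ring_nf
    have hcancel : rexp (b i * (x / 2)) * rexp (-b i * (x / 2)) = 1 := by
      rw [← Real.exp_add]; ring_nf; exact Real.exp_zero
    calc b i * rexp (-b i * x)
        = 2 / x * (b i * (x / 2)) * rexp (-b i * (x / 2)) * rexp (-b i * (x / 2)) := by
          rw [hsplit]; field_simp
      _ ≤ 2 / x * rexp (b i * (x / 2)) * rexp (-b i * (x / 2)) * rexp (-b i * (x / 2)) := by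
          gcongr; linarith
      _ = 2 / x * rexp (-b i * (x / 2)) := by rw [mul_assoc (2 / x), hcancel, mul_one]
  rw [← tsum_mul_left]
  refine Summable.tsum_le_tsum key ?_ (hs.mul_left _)
  exact (hs.mul_left _).of_nonneg_of_le (fun i ↦ mul_nonneg (hb i) (exp_pos _).le) key

end ExpSeries

open HurwitzKernelBounds in
lemma summable_sq_mul_exp_neg (a : ℝ) {t : ℝ} (ht : 0 < t) :
    Summable fun n : ℤ ↦ (n + a) ^ 2 * rexp (-π * (n + a) ^ 2 * t) :=
  (summable_f_int 2 a ht).congr fun n ↦ by rw [f_int, sq_abs]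

lemma hasDerivAt_evenKernel (a : ℝ) {x : ℝ} (hx : 0 < x) :
    HasDerivAt (evenKernel a)
      (-∑' n : ℤ, π * (n + a) ^ 2 * rexp (-π * (n + a) ^ 2 * x)) x := by
  have h := hasDerivAt_tsum_mul_exp_neg_mul (a := fun _ : ℤ ↦ (1 : ℝ))
    (b := fun n ↦ π * (n + a) ^ 2) (fun n ↦ by positivity) hx
    (fun y hy ↦ by simpa [neg_mul, mul_assoc] using (summable_sq_mul_exp_neg a hy).mul_left π)
    (by simpa [neg_mul] using (hasSum_int_evenKernel a hx).summable)
  simp only [one_mul, neg_mul] at h ⊢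
  refine h.congr_of_eventuallyEq ?_
  filter_upwards [Ioi_mem_nhds hx] with y hy
  simpa only [neg_mul] using (hasSum_int_evenKernel a hy).tsum_eq.symm

lemma hasSum_int_cosKernel_real (a : ℝ) {t : ℝ} (ht : 0 < t) :
    HasSum (fun n : ℤ ↦ cos (2 * π * a * n) * rexp (-π * n ^ 2 * t)) (cosKernel a t) := by
  have h := Complex.hasSum_re (hasSum_int_cosKernel a ht)
  convert h using 2 with n
  · have harg : 2 * (π : ℂ) * Complex.I * a * n = (2 * π * a * n : ℝ) * Complex.I := by
      push_cast; ring
    rw [Complex.re_mul_ofReal, harg, Complex.exp_ofReal_mul_I_re]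
  · simp

lemma summable_abs_cos_mul_sq_mul_exp_neg (a : ℝ) {t : ℝ} (ht : 0 < t) :
    Summable fun n : ℤ ↦ |cos (2 * π * a * n)| * (π * n ^ 2) * rexp (-π * n ^ 2 * t) := by
  refine ((summable_sq_mul_exp_neg 0 ht).mul_left π).of_nonneg_of_le
    (fun n ↦ by positivity) fun n ↦ ?_
  simp only [add_zero]
  calc |cos (2 * π * a * n)| * (π * n ^ 2) * rexp (-π * n ^ 2 * t)
      ≤ 1 * (π * n ^ 2) * rexp (-π * n ^ 2 * t) := by gcongr; exact abs_cos_le_one _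
    _ = π * (n ^ 2 * rexp (-π * n ^ 2 * t)) := by ring

lemma hasDerivAt_cosKernel (a : ℝ) {x : ℝ} (hx : 0 < x) :
    HasDerivAt (cosKernel a)
      (-∑' n : ℤ, cos (2 * π * a * n) * (π * n ^ 2) * rexp (-π * n ^ 2 * x)) x := by
  have hbound : ∀ y > 0, Summable fun n : ℤ ↦ |cos (2 * π * a * n)| * (π * n ^ 2) *
      rexp (-(π * n ^ 2) * y) := fun y hy ↦ by
    simpa only [neg_mul] using summable_abs_cos_mul_sq_mul_exp_neg a hy
  have h := hasDerivAt_tsum_mul_exp_neg_mul (a := fun n : ℤ ↦ cos (2 * π * a * n))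
    (b := fun n ↦ π * n ^ 2) (fun n ↦ by positivity) hx hbound
    (by simpa [neg_mul] using (hasSum_int_cosKernel_real a hx).summable)
  simp only [neg_mul] at h ⊢
  refine h.congr_of_eventuallyEq ?_
  filter_upwards [Ioi_mem_nhds hx] with y hy
  simpa only [neg_mul] using (hasSum_int_cosKernel_real a hy).tsum_eq.symm

lemma tendsto_pow_mul_evenKernel_atTop {a : UnitAddCircle} (ha : a ≠ 0) (k : ℕ) :
    Tendsto (fun x ↦ x ^ k * evenKernel a x) atTop (𝓝 0) := by
  obtain ⟨p, hp, hO⟩ := isBigO_atTop_evenKernel_sub a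
  simp only [ha, if_false, sub_zero] at hO
  refine ((Asymptotics.isBigO_refl (fun x : ℝ ↦ x ^ k) atTop).mul hO).trans_tendsto ?_
  simpa using tendsto_rpow_mul_exp_neg_mul_atTop_nhds_zero k p hp

lemma cosKernel_eq_sqrt_mul_evenKernel (a : UnitAddCircle) {c : ℝ} (hc : 0 < c) :
    cosKernel a c = √c⁻¹ * evenKernel a c⁻¹ := by
  rw [evenKernel_functional_equation, one_div c⁻¹, inv_inv, ← mul_assoc, ← sqrt_eq_rpow,
    one_div, mul_inv_cancel₀ (by positivity), one_mul]

lemma evenKernel_nonneg (a : ℝ) {x : ℝ} (hx : 0 < x) : 0 ≤ evenKernel a x :=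
  (hasSum_int_evenKernel a hx).nonneg fun _ ↦ (exp_pos _).le

lemma tsum_sq_mul_exp_neg_le_evenKernel (a : ℝ) {x : ℝ} (hx : 0 < x) :
    ∑' n : ℤ, π * (n + a) ^ 2 * rexp (-π * (n + a) ^ 2 * x) ≤
      2 / x * evenKernel a (x / 2) := by
  have h := tsum_mul_exp_neg_mul_le (b := fun n : ℤ ↦ π * (n + a) ^ 2)
    (fun n ↦ by positivity) hx
    (by simpa [neg_mul] using (hasSum_int_evenKernel a (half_pos hx)).summable)
  simp only [neg_mul, mul_assoc] at h ⊢
  simpa only [(hasSum_int_evenKernel a (half_pos hx)).tsum_eq.symm, neg_mul, mul_assoc] using h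

lemma hasDerivAt_sqrt_mul_evenKernel (a : ℝ) {x : ℝ} (hx : 0 < x) :
    HasDerivAt (fun y ↦ √y * evenKernel a y) (1 / (2 * √x) * evenKernel a x +
      √x * -∑' n : ℤ, π * (n + a) ^ 2 * rexp (-π * (n + a) ^ 2 * x)) x :=
  (hasDerivAt_sqrt hx.ne').mul (hasDerivAt_evenKernel a hx)

lemma deriv_cosKernel {a c : ℝ} (hc : 0 < c) :
    deriv (cosKernel a) c = -(c⁻¹ ^ 2 * deriv (fun y ↦ √y * evenKernel a y) c⁻¹) := by
  have hg := (hasDerivAt_sqrt_mul_evenKernel a (inv_pos.2 hc)).differentiableAt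
  have heq : cosKernel a =ᶠ[𝓝 c] (fun y ↦ √y * evenKernel a y) ∘ (·⁻¹) := by
    filter_upwards [Ioi_mem_nhds hc] with y hy
    exact cosKernel_eq_sqrt_mul_evenKernel a hy
  rw [heq.deriv_eq, deriv_comp c hg (differentiableAt_inv hc.ne'), deriv_inv, inv_pow]
  ring

lemma norm_sq_mul_deriv_sqrt_mul_evenKernel_le (a : ℝ) {x : ℝ} (hx : 1 ≤ x) :
    ‖x ^ 2 * deriv (fun y ↦ √y * evenKernel a y) x‖ ≤
      x ^ 2 * evenKernel a x + 8 * ((x / 2) ^ 2 * evenKernel a (x / 2)) := by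
  have hx0 : 0 < x := by linarith
  rw [(hasDerivAt_sqrt_mul_evenKernel a hx0).deriv, mul_neg]
  set E' := ∑' n : ℤ, π * (n + a) ^ 2 * rexp (-π * (n + a) ^ 2 * x)
  have hE := evenKernel_nonneg a hx0
  have hE2 := evenKernel_nonneg a (half_pos hx0)
  have hE' : 0 ≤ √x * E' := mul_nonneg (sqrt_nonneg x) (tsum_nonneg fun n ↦ by positivity)
  have h1 : 1 / (2 * √x) * evenKernel a x ≤ evenKernel a x := by
    refine mul_le_of_le_one_left hE ((div_le_one (by positivity)).2 ?_)
    linarith [one_le_sqrt.2 hx]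
  have h2 : √x * E' ≤ 2 * evenKernel a (x / 2) := calc
    √x * E' ≤ x * (2 / x * evenKernel a (x / 2)) :=
      mul_le_mul ((sqrt_le_left hx0.le).2 (by nlinarith)) (tsum_sq_mul_exp_neg_le_evenKernel a hx0)
        (tsum_nonneg fun n ↦ by positivity) hx0.le
    _ = 2 * evenKernel a (x / 2) := by field_simp
  have h0 : 0 ≤ 1 / (2 * √x) * evenKernel a x := by positivity
  rw [Real.norm_eq_abs, abs_mul, abs_of_nonneg (by positivity)]
  calc x ^ 2 * |1 / (2 * √x) * evenKernel a x + -(√x * E')|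
      ≤ x ^ 2 * (evenKernel a x + 2 * evenKernel a (x / 2)) := by
        gcongr
        exact abs_le.2 ⟨by linarith, by linarith⟩
    _ = x ^ 2 * evenKernel a x + 8 * ((x / 2) ^ 2 * evenKernel a (x / 2)) := by ring

lemma tendsto_sq_mul_deriv_sqrt_mul_evenKernel {a : ℝ} (ha : (a : UnitAddCircle) ≠ 0) :
    Tendsto (fun x ↦ x ^ 2 * deriv (fun y ↦ √y * evenKernel a y) x) atTop (𝓝 0) := by
  refine squeeze_zero_norm' (eventually_atTop.2 ⟨1, fun x hx ↦
    norm_sq_mul_deriv_sqrt_mul_evenKernel_le a hx⟩) ?_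
  have hdecay := tendsto_pow_mul_evenKernel_atTop ha 2
  simpa using hdecay.add ((hdecay.comp (tendsto_id.atTop_div_const two_pos)).const_mul 8)

theorem tendsto_deriv_cosKernel_nhdsGT_zero {a : ℝ} (ha : (a : UnitAddCircle) ≠ 0) :
    Tendsto (deriv (cosKernel a)) (𝓝[>] 0) (𝓝 0) := by
  have h := ((tendsto_sq_mul_deriv_sqrt_mul_evenKernel ha).comp tendsto_inv_nhdsGT_zero).neg
  rw [neg_zero] at h
  refine h.congr' ?_
  filter_upwards [self_mem_nhdsWithin] with c hc
  exact (deriv_cosKernel hc).symm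

noncomputable def volterraKernel (t : ℝ) : ℝ :=
  ∑' q : ℕ+, (-1 : ℝ) ^ ((q : ℕ) + 1) * (q : ℝ) ^ 2 * rexp (-(π ^ 2) * (q : ℝ) ^ 2 * t)

lemma deriv_cosKernel_half {t : ℝ} (ht : 0 < t) :
    deriv (cosKernel (1 / 2 : ℝ)) (π * t) = 2 * π * volterraKernel t := by
  set f : ℤ → ℝ := fun n ↦
    cos (2 * π * (1 / 2) * n) * (π * n ^ 2) * rexp (-π * n ^ 2 * (π * t)) with hf_def
  have hf : f.Even := fun n ↦ by simp [f]
  have hsum : Summable f := by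
    refine (summable_abs_cos_mul_sq_mul_exp_neg (1 / 2)
      (by positivity : 0 < π * t)).of_norm_bounded fun n ↦ ?_
    rw [norm_mul, norm_mul, Real.norm_eq_abs, norm_of_nonneg (by positivity),
      norm_of_nonneg (exp_pos _).le]
  have hq : ∀ q : ℕ+, f q = -π * ((-1 : ℝ) ^ ((q : ℕ) + 1) * (q : ℝ) ^ 2 *
      rexp (-(π ^ 2) * (q : ℝ) ^ 2 * t)) := fun q ↦ by
    have hcos : cos (2 * π * (1 / 2) * ((q : ℤ) : ℝ)) = (-1) ^ (q : ℕ) := by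
      rw [← cos_nat_mul_pi]; congr 1; push_cast; ring
    have hexp : rexp (-π * ((q : ℤ) : ℝ) ^ 2 * (π * t)) =
        rexp (-(π ^ 2) * (q : ℝ) ^ 2 * t) := by
      congr 1; push_cast; ring
    rw [hf_def]
    dsimp only
    rw [hcos, hexp, pow_succ]
    push_cast
    ring
  have hf0 : f 0 = 0 := by simp [f]
  rw [(hasDerivAt_cosKernel _ (by positivity)).deriv, ← hf_def,
    tsum_int_eq_zero_add_two_mul_tsum_pnat hf hsum, hf0, tsum_congr hq, tsum_mul_left,
    volterraKernel, nsmul_eq_mul]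
  ring

/-- The kernel `K(t) = ∑_{q=1}^∞ (-1)^{q+1} q² exp(-π² q² t)` tends to `0` as
`t → 0⁺`, i.e. along the filter of punctured right neighborhoods of `0`. -/
theorem kernel_tendsto_zero :
    Tendsto
      (fun t : ℝ => ∑' q : ℕ+,
        (-1 : ℝ) ^ ((q : ℕ) + 1) * (q : ℝ) ^ 2 * Real.exp (-(π ^ 2) * (q : ℝ) ^ 2 * t))
      (𝓝[>] (0 : ℝ)) (𝓝 0) := by
  change Tendsto volterraKernel (𝓝[>] 0) (𝓝 0)
  have hhalf : ((1 / 2 : ℝ) : UnitAddCircle) ≠ 0 := by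
    rw [Ne, AddCircle.coe_eq_zero_iff_of_mem_Ico ⟨by norm_num, by norm_num⟩]
    norm_num
  have hπt : Tendsto (π * ·) (𝓝[>] (0 : ℝ)) (𝓝[>] 0) :=
    tendsto_nhdsWithin_of_tendsto_nhds_of_eventually_within _
      (((continuous_const_mul π).tendsto' 0 0 (mul_zero π)).mono_left nhdsWithin_le_nhds)
      (eventually_nhdsWithin_of_forall fun _ ht ↦ mul_pos pi_pos ht)
  have h := ((tendsto_deriv_cosKernel_nhdsGT_zero hhalf).comp hπt).div_const (2 * π)
  rw [zero_div] at h
  refine h.congr' (eventually_nhdsWithin_of_forall fun t ht ↦ ?_)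
  rw [Function.comp_apply, deriv_cosKernel_half ht, mul_div_cancel_left₀ _ (by positivity)]
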